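/- Fix an integer t ≥ 1. Let i ≥ 1 and j ∈ {1,…,7}, and let x be a word over [t]^8 that is a common subsequence of π_i and π_{i+j} such that the projection of x⟨ℓ⟩ to the first 5 coordinates is the same for all positions ℓ of x. Then |x| ≤ t². -/
import Mathlib


/-- Lexicographic "strictly smaller" for vectors in `Fin r → ℤ`. -/
def lexLt {r : ℕ} (x y : Fin r → ℤ) : Prop :=
  ∃ j : Fin r, (∀ i : Fin r, i < j → x i = y i) ∧ x j < y j

/-- The `u`-twisted order on the alphabet `[t]^r`: `a` weakly precedes `b` in `π(u)`
iff `a = b` or `(u₁a₁, …, u_r a_r)` is lexicographically smaller than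
`(u₁b₁, …, u_r b_r)` (letters of `[t] = {1,…,t}` are represented by `Fin t`,
with `a i : Fin t` standing for the letter `(a i : ℤ) + 1`). -/
def uLe {t r : ℕ} (u : Fin r → ℤ) (a b : Fin r → Fin t) : Prop :=
  a = b ∨ lexLt (fun i => u i * ((a i : ℤ) + 1)) (fun i => u i * ((b i : ℤ) + 1))

instance {t r : ℕ} (u : Fin r → ℤ) : DecidableRel (uLe (t := t) (r := r) u) := fun a b => by
  unfold uLe lexLt; infer_instance

/-- `piWord t r u = π(u)`: the word listing every element of the alphabet `[t]^r`
exactly once, in increasing `u`-twisted lexicographic order. -/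
noncomputable def piWord (t r : ℕ) (u : Fin r → ℤ) : List (Fin r → Fin t) :=
  (Finset.univ.toList (α := Fin r → Fin t)).mergeSort (fun a b => decide (uLe u a b))

/-- `LCS ws` is the length of a longest word that is a subsequence of every word in `ws`. -/
noncomputable def LCS {α : Type*} (ws : List (List α)) : ℕ :=
  sSup {L | ∃ x : List α, (∀ w ∈ ws, x.Sublist w) ∧ x.length = L}

/-- The eight sign vectors `u^{(1)}, …, u^{(8)}` (rows), with `+` as `1` and `-` as `-1`. -/
def uMat : Fin 8 → Fin 8 → ℤ :=
  ![![1, 1, 1, 1, 1, 1, 1, 1],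
    ![-1, -1, -1, 1, -1, 1, -1, -1],
    ![1, 1, 1, -1, -1, -1, -1, 1],
    ![-1, 1, -1, -1, 1, 1, 1, -1],
    ![1, -1, -1, 1, -1, -1, 1, 1],
    ![-1, 1, 1, 1, 1, -1, -1, -1],
    ![1, -1, -1, -1, 1, 1, -1, 1],
    ![-1, -1, 1, -1, -1, -1, 1, -1]]

/-- `uSeq i = u^{(i)}` for `i ≥ 1`: the periodic extension `u^{(i)} = u^{(i mod 8)}`,
with the representative of `i mod 8` taken in `{1,…,8}`. -/
def uSeq (i : ℕ) : Fin 8 → ℤ := uMat ⟨(i - 1) % 8, Nat.mod_lt _ (by norm_num)⟩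

/-- `piSeq t i = π_i = π(u^{(i)})`, a permutation of the alphabet `[t]^8`. -/
noncomputable def piSeq (t : ℕ) (i : ℕ) : List (Fin 8 → Fin t) := piWord t 8 (uSeq i)

lemma lexLt_trans' {r : ℕ} {x y z : Fin r → ℤ} (h1 : lexLt x y) (h2 : lexLt y z) :
    lexLt x z := by
  obtain ⟨j1, e1, l1⟩ := h1
  obtain ⟨j2, e2, l2⟩ := h2
  rcases lt_trichotomy j1 j2 with h | h | h
  · exact ⟨j1, fun i hi => (e1 i hi).trans (e2 i (hi.trans h)), l1.trans_le (le_of_eq (e2 j1 h))⟩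
  · subst h
    exact ⟨j1, fun i hi => (e1 i hi).trans (e2 i hi), l1.trans l2⟩
  · exact ⟨j2, fun i hi => (e1 i (hi.trans h)).trans (e2 i hi), (e1 j2 h).trans_lt l2⟩

lemma lexLt_total' {r : ℕ} {x y : Fin r → ℤ} (h : x ≠ y) : lexLt x y ∨ lexLt y x := by
  have hne : (Finset.univ.filter (fun j : Fin r => x j ≠ y j)).Nonempty := by
    rcases Function.ne_iff.mp h with ⟨j, hj⟩
    exact ⟨j, by simp [hj]⟩
  set s := Finset.univ.filter (fun j : Fin r => x j ≠ y j)
  obtain ⟨j, hjs⟩ := hne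
  set m := s.min' ⟨j, hjs⟩ with hm
  have hmem : m ∈ s := s.min'_mem _
  have hmd : x m ≠ y m := by simpa [s] using hmem
  have heq : ∀ i, i < m → x i = y i := by
    intro i hi
    by_contra hc
    have : m ≤ i := s.min'_le i (by simp [s, hc])
    exact absurd hi (not_lt.mpr this)
  rcases lt_or_gt_of_ne hmd with h' | h'
  · exact Or.inl ⟨m, heq, h'⟩
  · exact Or.inr ⟨m, fun i hi => (heq i hi).symm, h'⟩

lemma uLe_trans' {t r : ℕ} (u : Fin r → ℤ) {a b c : Fin r → Fin t}
    (h1 : uLe u a b) (h2 : uLe u b c) : uLe u a c := by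
  rcases h1 with rfl | h1
  · exact h2
  rcases h2 with rfl | h2
  · exact Or.inr h1
  exact Or.inr (lexLt_trans' h1 h2)

lemma uLe_total' {t r : ℕ} (u : Fin r → ℤ) (hu : ∀ i, u i = 1 ∨ u i = -1)
    (a b : Fin r → Fin t) : uLe u a b ∨ uLe u b a := by
  by_cases hab : a = b
  · exact Or.inl (Or.inl hab)
  have hne : (fun i => u i * ((a i : ℤ) + 1)) ≠ (fun i => u i * ((b i : ℤ) + 1)) := by
    intro hc
    apply hab
    funext i
    have h0 := congrFun hc i
    have hu0 : u i ≠ 0 := by rcases hu i with h | h <;> simp [h]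
    have h1 : ((a i : ℤ) + 1) = ((b i : ℤ) + 1) := mul_left_cancel₀ hu0 h0
    have h2 : ((a i : ℤ)) = ((b i : ℤ)) := by omega
    exact Fin.ext (by exact_mod_cast h2)
  rcases lexLt_total' hne with h | h
  · exact Or.inl (Or.inr h)
  · exact Or.inr (Or.inr h)

lemma uMat_pm : ∀ r c : Fin 8, uMat r c = 1 ∨ uMat r c = -1 := by decide

lemma uSeq_pm (n : ℕ) : ∀ c, uSeq n c = 1 ∨ uSeq n c = -1 := fun c => uMat_pm _ c

lemma uMat_diff : ∀ r s : Fin 8, r ≠ s → ∃ c : Fin 8, 5 ≤ (c : ℕ) ∧ uMat r c ≠ uMat s c := by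
  decide

lemma piWord_pairwise (t r : ℕ) (u : Fin r → ℤ) (hu : ∀ i, u i = 1 ∨ u i = -1) :
    (piWord t r u).Pairwise (uLe u) := by
  have h := List.pairwise_mergeSort (le := fun a b : Fin r → Fin t => decide (uLe u a b))
    (fun a b c h1 h2 => decide_eq_true
      (uLe_trans' u (of_decide_eq_true h1) (of_decide_eq_true h2)))
    (fun a b => by
      simpa [Bool.or_eq_true, decide_eq_true_eq] using uLe_total' u hu a b)
    (Finset.univ.toList (α := Fin r → Fin t))
  exact h.imp (fun hab => of_decide_eq_true hab)

lemma piWord_nodup (t r : ℕ) (u : Fin r → ℤ) : (piWord t r u).Nodup :=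
  ((List.mergeSort_perm _ _).nodup_iff).mpr (Finset.nodup_toList _)

lemma chain_bound (t : ℕ) (v w : Fin 8 → ℤ)
    (hv : ∀ c, v c = 1 ∨ v c = -1) (hw : ∀ c, w c = 1 ∨ w c = -1)
    (k : Fin 8) (hk5 : 5 ≤ (k : ℕ)) (hk : v k ≠ w k)
    (x : List (Fin 8 → Fin t)) (hnd : x.Nodup)
    (hpv : x.Pairwise (uLe v)) (hpw : x.Pairwise (uLe w))
    (hproj : ∀ a b : Fin x.length, ∀ c : Fin 8, (c : ℕ) < 5 → x.get a c = x.get b c) :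
    x.length ≤ t ^ 2 := by
  obtain ⟨c₁, c₂, hcov⟩ : ∃ c₁ c₂ : Fin 8, ∀ c : Fin 8, c ≠ k → (c : ℕ) < 5 ∨ c = c₁ ∨ c = c₂ := by
    fin_cases k <;> simp at hk5 <;>
      [exact ⟨6, 7, by decide⟩; exact ⟨5, 7, by decide⟩; exact ⟨5, 6, by decide⟩]
  set f : Fin x.length → Fin t × Fin t := fun p => (x.get p c₁, x.get p c₂) with hf
  have key : ∀ p q : Fin x.length, p < q → f p = f q → False := by
    intro p q hpq hfeq
    have hne : x.get p ≠ x.get q := by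
      intro hc
      exact absurd ((List.Nodup.get_inj_iff hnd).mp hc) (ne_of_lt hpq)
    set a := x.get p
    set b := x.get q
    have hall : ∀ c : Fin 8, c ≠ k → a c = b c := by
      intro c hc
      rcases hcov c hc with h | h | h
      · exact hproj p q c h
      · subst h; exact congrArg Prod.fst hfeq
      · subst h; exact congrArg Prod.snd hfeq
    have hgv : uLe v a b := List.pairwise_iff_get.mp hpv p q hpq
    have hgw : uLe w a b := List.pairwise_iff_get.mp hpw p q hpq
    rcases hgv with h | ⟨jv, hjv1, hjv2⟩
    · exact hne h
    rcases hgw with h | ⟨jw, hjw1, hjw2⟩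
    · exact hne h
    have hjv2' : v jv * ((a jv : ℤ) + 1) < v jv * ((b jv : ℤ) + 1) := hjv2
    have hjw2' : w jw * ((a jw : ℤ) + 1) < w jw * ((b jw : ℤ) + 1) := hjw2
    have hjvk : jv = k := by
      by_contra hc; rw [hall jv hc] at hjv2'; exact lt_irrefl _ hjv2'
    have hjwk : jw = k := by
      by_contra hc; rw [hall jw hc] at hjw2'; exact lt_irrefl _ hjw2'
    rw [hjvk] at hjv2'
    rw [hjwk] at hjw2'
    rcases hv k with h1 | h1 <;> rcases hw k with h2 | h2 <;>
      rw [h1] at hjv2' <;> rw [h2] at hjw2' <;>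
      first
        | exact hk (h1.trans h2.symm)
        | linarith
  have hinj : Function.Injective f := by
    intro p q hpq
    rcases lt_trichotomy p q with h | h | h
    · exact absurd (key p q h hpq) not_false
    · exact h
    · exact absurd (key q p h hpq.symm) not_false
  calc x.length = Fintype.card (Fin x.length) := (Fintype.card_fin _).symm
    _ ≤ Fintype.card (Fin t × Fin t) := Fintype.card_le_of_injective f hinj
    _ = t ^ 2 := by simp [sq]

/-- For `t ≥ 1`, `i ≥ 1` and `j ∈ {1,…,7}`: if `x` is a common subsequence of `π_i` and
`π_{i+j}` all of whose symbols agree in their first `5` coordinates, then `|x| ≤ t²`. -/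
theorem stmt19 (t : ℕ) (ht : 1 ≤ t) (i j : ℕ) (hi : 1 ≤ i) (hj : 1 ≤ j) (hj7 : j ≤ 7)
    (x : List (Fin 8 → Fin t))
    (hx1 : x.Sublist (piSeq t i)) (hx2 : x.Sublist (piSeq t (i + j)))
    (hproj : ∀ a b : Fin x.length, ∀ c : Fin 8, (c : ℕ) < 5 → x.get a c = x.get b c) :
    x.length ≤ t ^ 2 := by
  set r1 : Fin 8 := ⟨(i - 1) % 8, Nat.mod_lt _ (by norm_num)⟩ with hr1
  set r2 : Fin 8 := ⟨(i + j - 1) % 8, Nat.mod_lt _ (by norm_num)⟩ with hr2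
  have h12 : r1 ≠ r2 := by
    intro h
    have hv := congrArg Fin.val h
    simp only [hr1, hr2] at hv
    omega
  obtain ⟨k, hk5, hk⟩ := uMat_diff r1 r2 h12
  have hk' : uSeq i k ≠ uSeq (i + j) k := hk
  have hnd : x.Nodup := hx1.nodup (piWord_nodup t 8 (uSeq i))
  have hpv : x.Pairwise (uLe (uSeq i)) :=
    List.Pairwise.sublist hx1 (piWord_pairwise t 8 (uSeq i) (uSeq_pm i))
  have hpw : x.Pairwise (uLe (uSeq (i + j))) :=
    List.Pairwise.sublist hx2 (piWord_pairwise t 8 (uSeq (i + j)) (uSeq_pm (i + j)))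
  exact chain_bound t (uSeq i) (uSeq (i + j)) (uSeq_pm i) (uSeq_pm (i + j))
    k hk5 hk' x hnd hpv hpw hproj
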